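/- Let Q be a positive definite quadratic form on R^N, h ∈ R^N, and P̂ a polynomial. Then there exist constants K, C > 0 such that for all x ≥ 1 (and uniformly for h in a set bounded away from the lattice Z^N if P̂(0)≠0 issues are excluded), the theta-type sum Θ̂(x) = Σ_{λ ∈ Z^N} exp(−x π² Q^∨(λ+h)) P̂(λ) satisfies |Θ̂(x)| ≤ C exp(−Kx), provided h ∉ Z^N. -/

import Mathlib

/-!
A positive definite form dominates a multiple of the sum of squares, `Q w ≥ c ∑ wᵢ²`. Hence
`exp (-π² Q (v + h)) |P̂ v|` is bounded by a finite sum, over the monomials of `P̂`, of products of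
one-dimensional series `∑ₙ |n|ᵏ exp (-c π² (n + hᵢ)²)`, which converge; this gives summability
at `x = 1`. If `h ∉ ℤᴺ`, some coordinate `hᵢ` is not an integer, so `(vᵢ + hᵢ)² ≥ ε > 0` and
`Q (v + h) ≥ c ε` on the whole lattice, and `exp (-x π² Q) ≤ exp (-(x - 1) π² c ε) exp (-π² Q)`
for `x ≥ 1` transfers the bound at `x = 1` to exponential decay in `x`.
-/

open Real

namespace QuadraticMap

variable {E : Type*} [NormedAddCommGroup E] [NormedSpace ℝ E] [FiniteDimensional ℝ E]

theorem continuous_of_finiteDimensional (Q : QuadraticForm ℝ E) : Continuous Q := by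
  have : ⇑Q = fun w => (associated (R := ℝ) Q).toContinuousBilinearMap w w := by
    funext w; exact (associated_eq_self_apply ℝ Q w).symm
  rw [this]
  fun_prop

theorem PosDef.exists_mul_norm_sq_le {Q : QuadraticForm ℝ E} (hQ : Q.PosDef) :
    ∃ c > 0, ∀ w, c * ‖w‖ ^ 2 ≤ Q w := by
  rcases subsingleton_or_nontrivial E with hE | hE
  · exact ⟨1, one_pos, fun w => by simp [Subsingleton.elim w 0]⟩
  obtain ⟨u, hu, hmin⟩ := (isCompact_sphere (0 : E) 1).exists_isMinOn
    (NormedSpace.sphere_nonempty.2 zero_le_one) Q.continuous_of_finiteDimensional.continuousOn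
  refine ⟨Q u, hQ u (ne_zero_of_mem_unit_sphere ⟨u, hu⟩), fun w => ?_⟩
  rcases eq_or_ne w 0 with rfl | hw
  · simp
  have hw' : ‖w‖⁻¹ • w ∈ Metric.sphere (0 : E) 1 := by simp [norm_smul, hw]
  calc Q u * ‖w‖ ^ 2 ≤ Q (‖w‖⁻¹ • w) * ‖w‖ ^ 2 := by gcongr; exact hmin hw'
    _ = Q w := by rw [QuadraticMap.map_smul, smul_eq_mul]; field_simp

theorem PosDef.exists_mul_sum_sq_le {ι : Type*} [Fintype ι] {Q : QuadraticForm ℝ (ι → ℝ)}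
    (hQ : Q.PosDef) : ∃ c > 0, ∀ w, c * ∑ i, w i ^ 2 ≤ Q w := by
  obtain ⟨c, hc, hcQ⟩ := hQ.exists_mul_norm_sq_le
  have hcard : (0 : ℝ) < Fintype.card ι + 1 := by positivity
  refine ⟨c / (Fintype.card ι + 1), div_pos hc hcard, fun w => ?_⟩
  have hsum : ∑ i, w i ^ 2 ≤ (Fintype.card ι + 1) * ‖w‖ ^ 2 := calc
    ∑ i, w i ^ 2 ≤ ∑ _i : ι, ‖w‖ ^ 2 := by
      refine Finset.sum_le_sum fun i _ => sq_le_sq.2 ?_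
      simpa [abs_of_nonneg (norm_nonneg w)] using norm_le_pi_norm w i
    _ ≤ (Fintype.card ι + 1) * ‖w‖ ^ 2 := by
      rw [Finset.sum_const, Finset.card_univ, nsmul_eq_mul]
      nlinarith [sq_nonneg ‖w‖]
  calc c / (Fintype.card ι + 1) * ∑ i, w i ^ 2
      ≤ c / (Fintype.card ι + 1) * ((Fintype.card ι + 1) * ‖w‖ ^ 2) := by gcongr
    _ = c * ‖w‖ ^ 2 := by field_simp
    _ ≤ Q w := hcQ w

end QuadraticMap

theorem summable_pi_prod_of_nonneg {α : Type*} {n : ℕ} {f : Fin n → α → ℝ}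
    (hf : ∀ i a, 0 ≤ f i a) (hs : ∀ i, Summable (f i)) :
    Summable fun v : Fin n → α => ∏ i, f i (v i) := by
  induction n with
  | zero => exact .of_finite
  | succ n ih =>
    have hprod := (hs 0).mul_of_nonneg (ih (fun i => hf i.succ) (fun i => hs i.succ))
      (hf 0) (fun v => Finset.prod_nonneg fun i _ => hf _ _)
    rw [← (Fin.consEquiv fun _ => α).summable_iff]
    refine hprod.congr fun p => ?_
    simp [Fin.consEquiv, Fin.prod_univ_succ]

theorem summable_abs_pow_mul_exp_neg_mul_add_sq {b : ℝ} (hb : 0 < b) (t : ℝ) (k : ℕ) :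
    Summable fun n : ℤ => |(n : ℝ)| ^ k * exp (-(b * ((n : ℝ) + t) ^ 2)) := by
  refine (summable_pow_mul_jacobiTheta₂_term_bound (b * |t| / π) (div_pos hb pi_pos) k
    ).of_nonneg_of_le (fun n => by positivity) fun n => ?_
  rw [Int.cast_abs]
  gcongr
  have hnt : 0 ≤ 2 * ((n : ℝ) * t) + 2 * (|(n : ℝ)| * |t|) + t ^ 2 := by
    nlinarith [neg_abs_le ((n : ℝ) * t), abs_mul (n : ℝ) t]
  have htheta : -π * (b / π * (n : ℝ) ^ 2 - 2 * (b * |t| / π) * |(n : ℝ)|) =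
      -(b * (n : ℝ) ^ 2 - 2 * b * (|(n : ℝ)| * |t|)) := by
    field_simp
  nlinarith [mul_nonneg hb.le hnt]

theorem abs_eval_le_sum_prod {σ : Type*} [Fintype σ] (P : MvPolynomial σ ℝ) (y : σ → ℝ) :
    |MvPolynomial.eval y P| ≤ ∑ s ∈ P.support, |P.coeff s| * ∏ i, |y i| ^ s i := by
  rw [MvPolynomial.eval_eq']
  refine (Finset.abs_sum_le_sum_abs _ _).trans_eq ?_
  simp only [abs_mul, Finset.abs_prod, abs_pow]

theorem exists_pos_le_add_sq_of_ne_int {t : ℝ} (ht : ∀ m : ℤ, t ≠ m) :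
    ∃ ε > 0, ∀ n : ℤ, ε ≤ ((n : ℝ) + t) ^ 2 := by
  have hne : t - round t ≠ 0 := sub_ne_zero.2 (ht _)
  refine ⟨(t - round t) ^ 2, by positivity, fun n => ?_⟩
  rw [← sq_abs, ← sq_abs ((n : ℝ) + t)]
  refine pow_le_pow_left₀ (abs_nonneg _) ?_ 2
  simpa [add_comm] using round_le t (-n)

theorem summable_abs_exp_neg_mul_eval {n : ℕ} {Q : QuadraticForm ℝ (Fin n → ℝ)} (hQ : Q.PosDef)
    (h : Fin n → ℝ) (P : MvPolynomial (Fin n) ℝ) :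
    Summable fun v : Fin n → ℤ =>
      |exp (-Q (fun i => (v i : ℝ) + h i)) * MvPolynomial.eval (fun i => (v i : ℝ)) P| := by
  obtain ⟨c, hc, hcQ⟩ := hQ.exists_mul_sum_sq_le
  have hmajorant : Summable fun v : Fin n → ℤ => ∑ s ∈ P.support,
      |P.coeff s| * ∏ i, (|(v i : ℝ)| ^ s i * exp (-(c * ((v i : ℝ) + h i) ^ 2))) :=
    summable_sum fun s _ => (summable_pi_prod_of_nonneg (fun i m => by positivity)
      fun i => summable_abs_pow_mul_exp_neg_mul_add_sq hc (h i) (s i)).mul_left _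
  refine hmajorant.of_nonneg_of_le (fun v => abs_nonneg _) fun v => ?_
  have hexp : exp (-Q (fun i => (v i : ℝ) + h i)) ≤
      ∏ i, exp (-(c * ((v i : ℝ) + h i) ^ 2)) := by
    rw [← exp_sum, exp_le_exp, Finset.sum_neg_distrib, ← Finset.mul_sum, neg_le_neg_iff]
    exact hcQ _
  calc |exp (-Q (fun i => (v i : ℝ) + h i)) * MvPolynomial.eval (fun i => (v i : ℝ)) P|
      = exp (-Q (fun i => (v i : ℝ) + h i)) * |MvPolynomial.eval (fun i => (v i : ℝ)) P| := by
        rw [abs_mul, abs_of_pos (exp_pos _)]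
    _ ≤ (∏ i, exp (-(c * ((v i : ℝ) + h i) ^ 2))) *
        ∑ s ∈ P.support, |P.coeff s| * ∏ i, |(v i : ℝ)| ^ s i :=
        mul_le_mul hexp (abs_eval_le_sum_prod P _) (abs_nonneg _) (by positivity)
    _ = _ := by
        simp only [Finset.mul_sum, Finset.prod_mul_distrib]
        exact Finset.sum_congr rfl fun s _ => by ring

theorem exp_neg_mul_le_exp_neg_mul_sub_one_mul {x a m : ℝ} (hx : 1 ≤ x) (hma : m ≤ a) :
    exp (-(x * a)) ≤ exp (-(m * (x - 1))) * exp (-a) := by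
  rw [← exp_add, exp_le_exp]
  nlinarith [mul_le_mul_of_nonneg_left hma (sub_nonneg.2 hx)]

theorem exists_summable_and_abs_tsum_le_mul_exp {ι : Type*} {f : ℝ → ι → ℝ} {F : ι → ℝ}
    {K : ℝ} (hK : 0 < K) (hF : Summable F)
    (hf : ∀ x, 1 ≤ x → ∀ v, ‖f x v‖ ≤ exp (-(K * (x - 1))) * F v) :
    ∃ K C : ℝ, 0 < K ∧ 0 < C ∧ ∀ x, 1 ≤ x → Summable (f x) ∧ |∑' v, f x v| ≤ C * exp (-K * x) := by
  refine ⟨K, (|∑' v, F v| + 1) * exp K, hK, by positivity, fun x hx => ?_⟩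
  refine ⟨.of_norm_bounded (hF.mul_left _) (hf x hx),
    (tsum_of_norm_bounded (hF.mul_left _).hasSum (hf x hx)).trans ?_⟩
  rw [tsum_mul_left]
  calc exp (-(K * (x - 1))) * ∑' v, F v ≤ exp (-(K * (x - 1))) * (|∑' v, F v| + 1) := by
        gcongr; linarith [le_abs_self (∑' v, F v)]
    _ = (|∑' v, F v| + 1) * exp K * exp (-K * x) := by
        rw [mul_assoc (|∑' v, F v| + 1), ← exp_add, mul_comm]; ring_nf

/-- for a positive definite quadratic form `Qd` on `ℝ^N`
(standing for the dual form `Q^∨` of a positive definite form `Q`), a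
polynomial `P̂`, and `h ∈ ℝ^N ∖ ℤ^N`, the theta-type sum
`Θ̂(x) = Σ_{λ ∈ ℤ^N} exp(−x π² Q^∨(λ+h)) P̂(λ)` converges and satisfies a
uniform exponential bound `|Θ̂(x)| ≤ C exp(−Kx)` for `x ≥ 1`. -/
theorem stmt13 (N : ℕ) (Qd : QuadraticForm ℝ (Fin N → ℝ)) (hQ : Qd.PosDef)
    (P : MvPolynomial (Fin N) ℝ) (h : Fin N → ℝ)
    (hh : ∀ m : Fin N → ℤ, h ≠ fun i => (m i : ℝ)) :
    ∃ K C : ℝ, 0 < K ∧ 0 < C ∧ ∀ x : ℝ, 1 ≤ x →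
      Summable (fun v : Fin N → ℤ =>
        Real.exp (-(x * π ^ 2 * Qd (fun i => (v i : ℝ) + h i))) *
          MvPolynomial.eval (fun i => (v i : ℝ)) P) ∧
      |∑' v : Fin N → ℤ,
        Real.exp (-(x * π ^ 2 * Qd (fun i => (v i : ℝ) + h i))) *
          MvPolynomial.eval (fun i => (v i : ℝ)) P| ≤ C * Real.exp (-K * x) := by
  obtain ⟨i₀, hi₀⟩ : ∃ i, ∀ m : ℤ, h i ≠ m := by
    by_contra! hcon
    choose m hm using hcon
    exact hh m (funext hm)
  obtain ⟨c, hc, hcQ⟩ := hQ.exists_mul_sum_sq_le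
  obtain ⟨ε, hε, hεle⟩ := exists_pos_le_add_sq_of_ne_int hi₀
  have hQ_ge (v : Fin N → ℤ) : c * ε ≤ Qd (fun i => (v i : ℝ) + h i) := calc
    c * ε ≤ c * ∑ i, ((v i : ℝ) + h i) ^ 2 := by
      gcongr
      exact (hεle (v i₀)).trans (Finset.single_le_sum (f := fun i => ((v i : ℝ) + h i) ^ 2)
        (fun i _ => sq_nonneg _) (Finset.mem_univ i₀))
    _ ≤ _ := hcQ _
  refine exists_summable_and_abs_tsum_le_mul_exp (K := π ^ 2 * (c * ε)) (by positivity)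
    (summable_abs_exp_neg_mul_eval (hQ.smul (by positivity : (0 : ℝ) < π ^ 2)) h P)
    fun x hx v => ?_
  rw [Real.norm_eq_abs, abs_mul, abs_mul, abs_of_pos (exp_pos _), abs_of_pos (exp_pos _),
    smul_apply, smul_eq_mul, ← mul_assoc, mul_assoc x]
  gcongr
  exact exp_neg_mul_le_exp_neg_mul_sub_one_mul hx (by gcongr; exact hQ_ge v)
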